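/- arXiv:0704.2516 — 8 statements merged into one kernel-verified Lean document; each statement's English description precedes it below -/
import Mathlib

section
/- If Q is a finite group, M is a Q-module, and π : Q → M is a surjective 1-cocycle (i.e., π(g₁g₂) = π(g₁)·g₁(π(g₂)) for all g₁,g₂ ∈ Q), then every 1-cocycle π' cohomologous to π (i.e., π'(g) = π(g)·g(m)·m⁻¹ for some fixed m ∈ M and all g) is also surjective. -/
/-! Writing `m = π g₁`, the cocycle identity gives `π g * ρ g m = π (g * g₁)`, so
`π' g = π (g * g₁) * m⁻¹`; as `g` varies, `g * g₁` runs over all of `Q`, and surjectivity of `π`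
passes to `π'`. -/

theorem cocycle_mul_inv_mul_apply {Q M : Type} [Group Q] [Mul M] (ρ : Q → M → M) (π : Q → M)
    (hπ : ∀ g₁ g₂, π (g₁ * g₂) = π g₁ * ρ g₁ (π g₂)) (g h : Q) :
    π (g * h⁻¹) * ρ (g * h⁻¹) (π h) = π g := by
  rw [← hπ, inv_mul_cancel_right]

theorem stmt0_general {Q M : Type} [Group Q] [CommGroup M]
    (ρ : Q → M → M)
    (π π' : Q → M)
    (hπ : ∀ g₁ g₂, π (g₁ * g₂) = π g₁ * ρ g₁ (π g₂))
    (hsurj : Function.Surjective π)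
    (m : M) (hcob : ∀ g, π' g = π g * ρ g m * m⁻¹) :
    Function.Surjective π' := by
  intro y
  obtain ⟨g₁, hg₁⟩ := hsurj m
  obtain ⟨g₂, hg₂⟩ := hsurj (m * y)
  have key := cocycle_mul_inv_mul_apply ρ π hπ g₂ g₁
  rw [hg₁, hg₂] at key
  exact ⟨g₂ * g₁⁻¹, by rw [hcob, key, mul_comm m y, mul_inv_cancel_right]⟩

theorem stmt0 {Q M : Type} [Group Q] [Finite Q] [CommGroup M]
    (ρ : Q → M → M)
    (hρhom : ∀ g a b, ρ g (a * b) = ρ g a * ρ g b)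
    (hρ1 : ∀ a, ρ 1 a = a)
    (hρmul : ∀ g₁ g₂ a, ρ (g₁ * g₂) a = ρ g₁ (ρ g₂ a))
    (π π' : Q → M)
    (hπ : ∀ g₁ g₂, π (g₁ * g₂) = π g₁ * ρ g₁ (π g₂))
    (hπ' : ∀ g₁ g₂, π' (g₁ * g₂) = π' g₁ * ρ g₁ (π' g₂))
    (hsurj : Function.Surjective π)
    (m : M) (hcob : ∀ g, π' g = π g * ρ g m * m⁻¹) :
    Function.Surjective π' :=
  stmt0_general ρ π π' hπ hsurj m hcob
end

section
/- Let 1 → A → G → Q → 1 be an extension of finite groups with A abelian, with transversal {ḡ}_{g∈Q} and factor set β ∈ Z²(Q,A) defined by ḡ₁ḡ₂ = β(g₁,g₂)·(g₁g₂)̄. For a 1-cocycle π ∈ Z¹(Q,Â), where Â = Hom(A,ℂ*) with diagonal Q-action, define the 2-cochain φ_π on G by φ_π(a₁ḡ₁, a₂ḡ₂) := ⟨π(g₁), g₁(a₂)⟩⁻¹. Then the coboundary of φ_π satisfies δ²(φ_π)(a₁ḡ₁, a₂ḡ₂, a₃ḡ₃) = ⟨π(g₁), g₁(β(g₂,g₃))⟩⁻¹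 for all aᵢ ∈ A, gᵢ ∈ Q. -/
/-!
Write every element of `G` as `γ = i (r γ) * s (p γ)`. Multiplying out
`(a₂ ḡ₂)(a₃ ḡ₃) = a₂ g₂(a₃) β(g₂, g₃) (g₂g₃)‾` shows that `r` is multiplicative up to the
twist by the action and the factor set. Setting `ψ g a := π g (g(a))`, the cocycle condition on `π`
becomes `ψ (g h) a = ψ g (h(a)) * ψ h a`. Expanding the four factors of `δ²(φ_π)` with these two
identities and the multiplicativity of each `π g`, everything cancels in the abelian group `ℂˣ`
except the contribution `⟨π(g₁), g₁(β(g₂, g₃))⟩⁻¹` of the factor set.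
-/

section ConjugationAction

variable {A G Q : Type*} [Group G] {s : Q → G} {act : Q → A → A}

theorem act_mul_of_conj [Group A] {i : A →* G} (hi : Function.Injective i)
    (hact : ∀ g a, i (act g a) = s g * i a * (s g)⁻¹) (g : Q) (a b : A) :
    act g (a * b) = act g a * act g b := by
  apply hi
  simp only [map_mul, hact]
  group

theorem act_act_of_conj [CommGroup A] [Group Q] {i : A →* G} (hi : Function.Injective i)
    {β : Q → Q → A} (hβ : ∀ g₁ g₂, s g₁ * s g₂ = i (β g₁ g₂) * s (g₁ * g₂))
    (hact : ∀ g a, i (act g a) = s g * i a * (s g)⁻¹) (g h : Q) (a : A) :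
    act g (act h a) = act (g * h) a := by
  apply hi
  have hβ' : i (β g h) = s g * s h * (s (g * h))⁻¹ := by rw [hβ g h]; group
  -- `i (β g h)` intertwines conjugation by `s g * s h` and by `s (g * h)`, and commutes with `i A`
  have hconj : i (β g h) * i (act g (act h a)) = i (β g h) * i (act (g * h) a) := by
    rw [← map_mul, mul_comm, map_mul]
    simp only [hact, hβ']
    group
  exact mul_left_cancel hconj

theorem kernelCoord_mul [Group A] [Group Q] {i : A →* G} (hi : Function.Injective i) {p : G →* Q}
    {r : G → A} (hr : ∀ γ : G, γ = i (r γ) * s (p γ))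
    {β : Q → Q → A} (hβ : ∀ g₁ g₂, s g₁ * s g₂ = i (β g₁ g₂) * s (g₁ * g₂))
    (hact : ∀ g a, i (act g a) = s g * i a * (s g)⁻¹) (γ₂ γ₃ : G) :
    r (γ₂ * γ₃) = r γ₂ * act (p γ₂) (r γ₃) * β (p γ₂) (p γ₃) := by
  apply hi
  apply mul_right_cancel (b := s (p γ₂ * p γ₃))
  have hs : s (p γ₂ * p γ₃) = (i (β (p γ₂) (p γ₃)))⁻¹ * (s (p γ₂) * s (p γ₃)) := by
    rw [hβ]; group
  calc i (r (γ₂ * γ₃)) * s (p γ₂ * p γ₃) = γ₂ * γ₃ := by rw [← map_mul, ← hr]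
    _ = i (r γ₂) * s (p γ₂) * (i (r γ₃) * s (p γ₃)) := by rw [← hr, ← hr]
    _ = i (r γ₂ * act (p γ₂) (r γ₃) * β (p γ₂) (p γ₃)) * s (p γ₂ * p γ₃) := by
      rw [map_mul, map_mul, hact, hs]
      group

theorem cocycle_twisted_mul [CommGroup A] [Group Q] {M : Type*} [Mul M] {i : A →* G}
    (hi : Function.Injective i)
    {β : Q → Q → A} (hβ : ∀ g₁ g₂, s g₁ * s g₂ = i (β g₁ g₂) * s (g₁ * g₂))
    (hact : ∀ g a, i (act g a) = s g * i a * (s g)⁻¹) {π : Q → A → M}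
    (hπcoc : ∀ g₁ g₂ a, π (g₁ * g₂) a = π g₁ a * π g₂ (act g₁⁻¹ a)) (g h : Q) (a : A) :
    π (g * h) (act (g * h) a) = π g (act g (act h a)) * π h (act h a) := by
  rw [hπcoc, act_act_of_conj hi hβ hact, act_act_of_conj hi hβ hact, inv_mul_cancel_left]

end ConjugationAction

theorem stmt1_general
    {A G Q : Type} [CommGroup A] [Group G] [Group Q]
    (i : A →* G) (p : G →* Q)
    (hi : Function.Injective i)
    (s : Q → G)
    (r : G → A) (hr : ∀ γ : G, γ = i (r γ) * s (p γ))
    (β : Q → Q → A) (hβ : ∀ g₁ g₂, s g₁ * s g₂ = i (β g₁ g₂) * s (g₁ * g₂))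
    (act : Q → A → A) (hact : ∀ g a, i (act g a) = s g * i a * (s g)⁻¹)
    (π : Q → A → ℂˣ)
    (hπhom : ∀ g a b, π g (a * b) = π g a * π g b)
    (hπcoc : ∀ g₁ g₂ a, π (g₁ * g₂) a = π g₁ a * π g₂ (act g₁⁻¹ a))
    (Φ : G → G → ℂˣ)
    (hΦ : ∀ γ₁ γ₂, Φ γ₁ γ₂ = (π (p γ₁) (act (p γ₁) (r γ₂)))⁻¹)
 :
    ∀ γ₁ γ₂ γ₃ : G,
      Φ γ₂ γ₃ * (Φ (γ₁ * γ₂) γ₃)⁻¹ * Φ γ₁ (γ₂ * γ₃) * (Φ γ₁ γ₂)⁻¹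
        = (π (p γ₁) (act (p γ₁) (β (p γ₂) (p γ₃))))⁻¹ := by
  intro γ₁ γ₂ γ₃
  simp only [hΦ, map_mul, cocycle_twisted_mul hi hβ hact hπcoc, kernelCoord_mul hi hr hβ hact,
    act_mul_of_conj hi hact, hπhom, mul_inv_rev, inv_inv]
  apply Additive.ofMul.injective
  simp only [ofMul_mul, ofMul_inv]
  abel

theorem stmt1
    {A G Q : Type} [CommGroup A] [Group G] [Group Q]
    [Fintype A] [Fintype G] [Fintype Q]
    (i : A →* G) (p : G →* Q)
    (hi : Function.Injective i) (hp : Function.Surjective p)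
    (hker : ∀ γ : G, p γ = 1 ↔ γ ∈ Set.range i)
    (s : Q → G) (hs : ∀ q, p (s q) = q) (hs1 : s 1 = 1)
    (r : G → A) (hr : ∀ γ : G, γ = i (r γ) * s (p γ))
    (β : Q → Q → A) (hβ : ∀ g₁ g₂, s g₁ * s g₂ = i (β g₁ g₂) * s (g₁ * g₂))
    (act : Q → A → A) (hact : ∀ g a, i (act g a) = s g * i a * (s g)⁻¹)
    (π : Q → A → ℂˣ)
    (hπhom : ∀ g a b, π g (a * b) = π g a * π g b)
    (hπcoc : ∀ g₁ g₂ a, π (g₁ * g₂) a = π g₁ a * π g₂ (act g₁⁻¹ a))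
    (Φ : G → G → ℂˣ)
    (hΦ : ∀ γ₁ γ₂, Φ γ₁ γ₂ = (π (p γ₁) (act (p γ₁) (r γ₂)))⁻¹)
 :
    ∀ γ₁ γ₂ γ₃ : G,
      Φ γ₂ γ₃ * (Φ (γ₁ * γ₂) γ₃)⁻¹ * Φ γ₁ (γ₂ * γ₃) * (Φ γ₁ γ₂)⁻¹
        = (π (p γ₁) (act (p γ₁) (β (p γ₂) (p γ₃))))⁻¹ :=
  stmt1_general i p hi s r hr β hβ act hact π hπhom hπcoc Φ hΦ
end

section
/- With the setup of the extension 1 → A → G → Q → 1 (A abelian), if π ∈ Z¹(Q,Â) and there exists a 2-cochain ζ_π ∈ C²(Q,ℂ*) with δ²(ζ_π)(g₁,g₂,g₃) = ⟨π(g₁), g₁(β(g₂,g₃))⟩, then c_π := φ_π · ζ̄_π is a 2-cocycle in Z²(G,ℂ*), where ζ̄_π is the inflation of ζ_π to G. -/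
/-!
Write `γ = i (r γ) * s (p γ)`. Multiplying two such normal forms gives
`r (γ₂ γ₃) = r γ₂ · g₂(r γ₃) · β(g₂, g₃)`, and the crossed-homomorphism rule for `π` splits
`⟨π(g₁ g₂), g₁ g₂ a⟩` as `⟨π g₁, g₁ g₂ a⟩ ⟨π g₂, g₂ a⟩`. Together these show that `φ_π` fails the
cocycle identity exactly by the factor `⟨π g₁, g₁ β(g₂, g₃)⟩`, which is the coboundary of `ζ_π`
pulled back along `p`, so the two defects cancel in `c_π = φ_π · ζ̄_π`.
-/

open Function

section Extension

variable {A G Q : Type} [Group G] [Group Q]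

theorem map_mul_of_injective_conj [Group A] {i : A →* G} (hi : Injective i) {f : A → A} {g : G}
    (hf : ∀ a, i (f a) = g * i a * g⁻¹) (a b : A) : f (a * b) = f a * f b :=
  hi <| by simp only [hf, map_mul]; group

theorem act_mul_of_factorSet [CommGroup A] {i : A →* G} (hi : Injective i) {s : Q → G}
    {β : Q → Q → A} (hβ : ∀ g₁ g₂, s g₁ * s g₂ = i (β g₁ g₂) * s (g₁ * g₂))
    {act : Q → A → A} (hact : ∀ g a, i (act g a) = s g * i a * (s g)⁻¹) (g₁ g₂ : Q) (a : A) :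
    act (g₁ * g₂) a = act g₁ (act g₂ a) := by
  have hs : s (g₁ * g₂) = (i (β g₁ g₂))⁻¹ * (s g₁ * s g₂) := eq_inv_mul_of_mul_eq (hβ g₁ g₂).symm
  -- conjugating by `i (β g₁ g₂)` is trivial on `i A` because `A` is abelian
  have hconj : i (act (g₁ * g₂) a) = i ((β g₁ g₂)⁻¹ * act g₁ (act g₂ a) * β g₁ g₂) := by
    simp only [map_mul, map_inv, hact, hs]
    group
  rw [hi hconj, mul_comm, mul_inv_cancel_left]

theorem sectionCoord_mul [Group A] {i : A →* G} (hi : Injective i) {p : G →* Q} {s : Q → G}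
    {r : G → A} (hr : ∀ γ, γ = i (r γ) * s (p γ))
    {β : Q → Q → A} (hβ : ∀ g₁ g₂, s g₁ * s g₂ = i (β g₁ g₂) * s (g₁ * g₂))
    {act : Q → A → A} (hact : ∀ g a, i (act g a) = s g * i a * (s g)⁻¹) (γ₁ γ₂ : G) :
    r (γ₁ * γ₂) = r γ₁ * act (p γ₁) (r γ₂) * β (p γ₁) (p γ₂) := by
  refine hi (mul_right_cancel (b := s (p (γ₁ * γ₂))) ?_)
  rw [← hr, map_mul p, map_mul i, map_mul i, hact, mul_assoc _ (i _), ← hβ]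
  conv_lhs => rw [hr γ₁, hr γ₂]
  group

end Extension

theorem pairing_act_mul {A Q M : Type} [Group Q] [Mul M] {act : Q → A → A}
    (hact : ∀ g₁ g₂ a, act (g₁ * g₂) a = act g₁ (act g₂ a)) {π : Q → A → M}
    (hπ : ∀ g₁ g₂ a, π (g₁ * g₂) a = π g₁ a * π g₂ (act g₁⁻¹ a)) (g₁ g₂ : Q) (a : A) :
    π (g₁ * g₂) (act (g₁ * g₂) a) = π g₁ (act g₁ (act g₂ a)) * π g₂ (act g₂ a) := by
  rw [hπ, ← hact g₁⁻¹, inv_mul_cancel_left, hact]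

theorem pairingCochain_cocycle_defect {A G Q M : Type} [Mul A] [Group G] [Group Q] [CommGroup M]
    {p : G →* Q} {r : G → A} {β : Q → Q → A} {act : Q → A → A}
    (hact_mul : ∀ g a b, act g (a * b) = act g a * act g b)
    (hact_comp : ∀ g₁ g₂ a, act (g₁ * g₂) a = act g₁ (act g₂ a))
    (hr : ∀ γ₁ γ₂, r (γ₁ * γ₂) = r γ₁ * act (p γ₁) (r γ₂) * β (p γ₁) (p γ₂))
    {π : Q → A → M} (hπhom : ∀ g a b, π g (a * b) = π g a * π g b)
    (hπcoc : ∀ g₁ g₂ a, π (g₁ * g₂) a = π g₁ a * π g₂ (act g₁⁻¹ a))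
    {Φ : G → G → M} (hΦ : ∀ γ₁ γ₂, Φ γ₁ γ₂ = (π (p γ₁) (act (p γ₁) (r γ₂)))⁻¹) (γ₁ γ₂ γ₃ : G) :
    Φ γ₁ γ₂ * Φ (γ₁ * γ₂) γ₃
      = Φ γ₂ γ₃ * Φ γ₁ (γ₂ * γ₃) * π (p γ₁) (act (p γ₁) (β (p γ₂) (p γ₃))) := by
  rw [← mul_inv_eq_iff_eq_mul]
  simp only [hΦ, map_mul p, pairing_act_mul hact_comp hπcoc, hr, hact_mul, hπhom, mul_inv]
  grind

theorem stmt2_general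
    {A G Q : Type} [CommGroup A] [Group G] [Group Q]
    (i : A →* G) (p : G →* Q)
    (hi : Function.Injective i)
    (s : Q → G)
    (r : G → A) (hr : ∀ γ : G, γ = i (r γ) * s (p γ))
    (β : Q → Q → A) (hβ : ∀ g₁ g₂, s g₁ * s g₂ = i (β g₁ g₂) * s (g₁ * g₂))
    (act : Q → A → A) (hact : ∀ g a, i (act g a) = s g * i a * (s g)⁻¹)
    (π : Q → A → ℂˣ)
    (hπhom : ∀ g a b, π g (a * b) = π g a * π g b)
    (hπcoc : ∀ g₁ g₂ a, π (g₁ * g₂) a = π g₁ a * π g₂ (act g₁⁻¹ a))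
    (Φ : G → G → ℂˣ)
    (hΦ : ∀ γ₁ γ₂, Φ γ₁ γ₂ = (π (p γ₁) (act (p γ₁) (r γ₂)))⁻¹)
    (ζ : Q → Q → ℂˣ)
    (hζ : ∀ g₁ g₂ g₃, ζ g₂ g₃ * (ζ (g₁ * g₂) g₃)⁻¹ * ζ g₁ (g₂ * g₃) * (ζ g₁ g₂)⁻¹
      = π g₁ (act g₁ (β g₂ g₃)))
    (cπ : G → G → ℂˣ)
    (hcπ : ∀ γ₁ γ₂, cπ γ₁ γ₂ = Φ γ₁ γ₂ * ζ (p γ₁) (p γ₂))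
 :
    ∀ γ₁ γ₂ γ₃ : G, cπ γ₁ γ₂ * cπ (γ₁ * γ₂) γ₃ = cπ γ₂ γ₃ * cπ γ₁ (γ₂ * γ₃) := by
  intro γ₁ γ₂ γ₃
  have hΦ_defect := pairingCochain_cocycle_defect
    (fun g => map_mul_of_injective_conj hi (hact g)) (act_mul_of_factorSet hi hβ hact)
    (sectionCoord_mul hi hr hβ hact) hπhom hπcoc hΦ γ₁ γ₂ γ₃
  set g₁ := p γ₁
  set g₂ := p γ₂
  set g₃ := p γ₃
  have hζ_defect : ζ g₁ g₂ * ζ (g₁ * g₂) g₃ * π g₁ (act g₁ (β g₂ g₃))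
      = ζ g₂ g₃ * ζ g₁ (g₂ * g₃) := by
    rw [← hζ]
    simp [mul_comm, mul_left_comm, mul_assoc]
  simp only [hcπ, map_mul p]
  calc Φ γ₁ γ₂ * ζ g₁ g₂ * (Φ (γ₁ * γ₂) γ₃ * ζ (g₁ * g₂) g₃)
      = Φ γ₁ γ₂ * Φ (γ₁ * γ₂) γ₃ * (ζ g₁ g₂ * ζ (g₁ * g₂) g₃) := mul_mul_mul_comm ..
    _ = Φ γ₂ γ₃ * Φ γ₁ (γ₂ * γ₃) * (ζ g₁ g₂ * ζ (g₁ * g₂) g₃ * π g₁ (act g₁ (β g₂ g₃))) := by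
      rw [hΦ_defect]; ac_rfl
    _ = Φ γ₂ γ₃ * ζ g₂ g₃ * (Φ γ₁ (γ₂ * γ₃) * ζ g₁ (g₂ * g₃)) := by
      rw [hζ_defect, mul_mul_mul_comm]

theorem stmt2
    {A G Q : Type} [CommGroup A] [Group G] [Group Q]
    [Fintype A] [Fintype G] [Fintype Q]
    (i : A →* G) (p : G →* Q)
    (hi : Function.Injective i) (hp : Function.Surjective p)
    (hker : ∀ γ : G, p γ = 1 ↔ γ ∈ Set.range i)
    (s : Q → G) (hs : ∀ q, p (s q) = q) (hs1 : s 1 = 1)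
    (r : G → A) (hr : ∀ γ : G, γ = i (r γ) * s (p γ))
    (β : Q → Q → A) (hβ : ∀ g₁ g₂, s g₁ * s g₂ = i (β g₁ g₂) * s (g₁ * g₂))
    (act : Q → A → A) (hact : ∀ g a, i (act g a) = s g * i a * (s g)⁻¹)
    (π : Q → A → ℂˣ)
    (hπhom : ∀ g a b, π g (a * b) = π g a * π g b)
    (hπcoc : ∀ g₁ g₂ a, π (g₁ * g₂) a = π g₁ a * π g₂ (act g₁⁻¹ a))
    (Φ : G → G → ℂˣ)
    (hΦ : ∀ γ₁ γ₂, Φ γ₁ γ₂ = (π (p γ₁) (act (p γ₁) (r γ₂)))⁻¹)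
    (ζ : Q → Q → ℂˣ)
    (hζ : ∀ g₁ g₂ g₃, ζ g₂ g₃ * (ζ (g₁ * g₂) g₃)⁻¹ * ζ g₁ (g₂ * g₃) * (ζ g₁ g₂)⁻¹
      = π g₁ (act g₁ (β g₂ g₃)))
    (cπ : G → G → ℂˣ)
    (hcπ : ∀ γ₁ γ₂, cπ γ₁ γ₂ = Φ γ₁ γ₂ * ζ (p γ₁) (p γ₂))
 :
    ∀ γ₁ γ₂ γ₃ : G, cπ γ₁ γ₂ * cπ (γ₁ * γ₂) γ₃ = cπ γ₂ γ₃ * cπ γ₁ (γ₂ * γ₃) :=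
  stmt2_general i p hi s r hr β hβ act hact π hπhom hπcoc Φ hΦ ζ hζ cπ hcπ
end

section
/- If π ∈ B¹(Q,Â) is a 1-coboundary, i.e., π(g) = g(χ)·χ⁻¹ for some character χ ∈ Â, then with the choice ζ_π(g₁,g₂) := ⟨χ, β(g₁,g₂)⟩ the resulting 2-cocycle c_π = φ_π · ζ̄_π is a 2-coboundary on G; explicitly, c_π = δ¹(χ̄⁻¹) where χ̄(aḡ) := χ(a). -/
/-! Writing `γ = i (r γ) * s (p γ)`, the `A`-coordinate of a product is
`r (γ₁ γ₂) = r γ₁ · g₁(r γ₂) · β(g₁, g₂)` with `gₖ = p γₖ`. Applying the character `χ`, the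
factor `χ (β g₁ g₂) = ζ_π` cancels against the last term, and
`π g₁ (g₁ a) = χ a / χ (g₁ a)` cancels the middle one, leaving `δ¹(χ̄⁻¹)`. -/

open Function

section Extension

variable {A G Q : Type*} [CommGroup A] [Group G] [Group Q] {i : A →* G} {s : Q → G}
  {β : Q → Q → A} {act : Q → A → A}

/-- `s g⁻¹ * s g` lies in `i A`, which is abelian, so conjugating by it fixes `i A`. -/
theorem act_inv_act (hi : Injective i) (hs1 : s 1 = 1)
    (hβ : ∀ g₁ g₂, s g₁ * s g₂ = i (β g₁ g₂) * s (g₁ * g₂))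
    (hact : ∀ g a, i (act g a) = s g * i a * (s g)⁻¹) (g : Q) (a : A) :
    act g⁻¹ (act g a) = a := by
  apply hi
  have hβg : s g⁻¹ * s g = i (β g⁻¹ g) := by simpa [hs1] using hβ g⁻¹ g
  calc i (act g⁻¹ (act g a)) = (s g⁻¹ * s g) * i a * (s g⁻¹ * s g)⁻¹ := by
        rw [hact, hact]; group
    _ = i a := by rw [hβg, ← map_inv, ← map_mul, ← map_mul, mul_inv_cancel_comm]

theorem r_mul {p : G →* Q} {r : G → A} (hi : Injective i)
    (hr : ∀ γ : G, γ = i (r γ) * s (p γ))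
    (hβ : ∀ g₁ g₂, s g₁ * s g₂ = i (β g₁ g₂) * s (g₁ * g₂))
    (hact : ∀ g a, i (act g a) = s g * i a * (s g)⁻¹) (γ₁ γ₂ : G) :
    r (γ₁ * γ₂) = r γ₁ * act (p γ₁) (r γ₂) * β (p γ₁) (p γ₂) := by
  apply hi
  apply mul_right_cancel (b := s (p γ₁ * p γ₂))
  calc i (r (γ₁ * γ₂)) * s (p γ₁ * p γ₂) = γ₁ * γ₂ := by rw [← map_mul]; exact (hr _).symm
    _ = (i (r γ₁) * s (p γ₁)) * (i (r γ₂) * s (p γ₂)) := by rw [← hr, ← hr]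
    _ = i (r γ₁) * (s (p γ₁) * i (r γ₂) * (s (p γ₁))⁻¹) * (s (p γ₁) * s (p γ₂)) := by group
    _ = i (r γ₁ * act (p γ₁) (r γ₂) * β (p γ₁) (p γ₂)) * s (p γ₁ * p γ₂) := by
      rw [← hact, hβ, map_mul, map_mul]; group

end Extension

theorem stmt4_general
    {A G Q : Type} [CommGroup A] [Group G] [Group Q]
    (i : A →* G) (p : G →* Q)
    (hi : Function.Injective i)
    (s : Q → G) (hs1 : s 1 = 1)
    (r : G → A) (hr : ∀ γ : G, γ = i (r γ) * s (p γ))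
    (β : Q → Q → A) (hβ : ∀ g₁ g₂, s g₁ * s g₂ = i (β g₁ g₂) * s (g₁ * g₂))
    (act : Q → A → A) (hact : ∀ g a, i (act g a) = s g * i a * (s g)⁻¹)
    (χ : A → ℂˣ) (hχhom : ∀ a b, χ (a * b) = χ a * χ b)
    (π : Q → A → ℂˣ)
    (hπdef : ∀ g a, π g a = χ (act g⁻¹ a) * (χ a)⁻¹)
    (Φ : G → G → ℂˣ)
    (hΦ : ∀ γ₁ γ₂, Φ γ₁ γ₂ = (π (p γ₁) (act (p γ₁) (r γ₂)))⁻¹)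
    (ζ : Q → Q → ℂˣ) (hζdef : ∀ g₁ g₂, ζ g₁ g₂ = χ (β g₁ g₂))
    (cπ : G → G → ℂˣ)
    (hcπ : ∀ γ₁ γ₂, cπ γ₁ γ₂ = Φ γ₁ γ₂ * ζ (p γ₁) (p γ₂)) :
    ∀ γ₁ γ₂ : G, cπ γ₁ γ₂ = (χ (r γ₂))⁻¹ * χ (r (γ₁ * γ₂)) * (χ (r γ₁))⁻¹ := by
  intro γ₁ γ₂
  have hχr : χ (r (γ₁ * γ₂)) = χ (r γ₁) * χ (act (p γ₁) (r γ₂)) * χ (β (p γ₁) (p γ₂)) := by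
    rw [r_mul hi hr hβ hact, hχhom, hχhom]
  rw [hcπ, hΦ, hζdef, hπdef, act_inv_act hi hs1 hβ hact, hχr]
  simp only [mul_inv_rev, inv_inv, mul_comm, mul_left_comm, mul_inv_cancel_left]

theorem stmt4
    {A G Q : Type} [CommGroup A] [Group G] [Group Q]
    [Fintype A] [Fintype G] [Fintype Q]
    (i : A →* G) (p : G →* Q)
    (hi : Function.Injective i) (hp : Function.Surjective p)
    (hker : ∀ γ : G, p γ = 1 ↔ γ ∈ Set.range i)
    (s : Q → G) (hs : ∀ q, p (s q) = q) (hs1 : s 1 = 1)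
    (r : G → A) (hr : ∀ γ : G, γ = i (r γ) * s (p γ))
    (β : Q → Q → A) (hβ : ∀ g₁ g₂, s g₁ * s g₂ = i (β g₁ g₂) * s (g₁ * g₂))
    (act : Q → A → A) (hact : ∀ g a, i (act g a) = s g * i a * (s g)⁻¹)
    (χ : A → ℂˣ) (hχhom : ∀ a b, χ (a * b) = χ a * χ b)
    (π : Q → A → ℂˣ)
    (hπdef : ∀ g a, π g a = χ (act g⁻¹ a) * (χ a)⁻¹)
    (Φ : G → G → ℂˣ)
    (hΦ : ∀ γ₁ γ₂, Φ γ₁ γ₂ = (π (p γ₁) (act (p γ₁) (r γ₂)))⁻¹)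
    (ζ : Q → Q → ℂˣ) (hζdef : ∀ g₁ g₂, ζ g₁ g₂ = χ (β g₁ g₂))
    (cπ : G → G → ℂˣ)
    (hcπ : ∀ γ₁ γ₂, cπ γ₁ γ₂ = Φ γ₁ γ₂ * ζ (p γ₁) (p γ₂)) :
    ∀ γ₁ γ₂ : G, cπ γ₁ γ₂ = (χ (r γ₂))⁻¹ * χ (r (γ₁ * γ₂)) * (χ (r γ₁))⁻¹ :=
  stmt4_general i p hi s hs1 r hr β hβ act hact χ hχhom π hπdef Φ hΦ ζ hζdef cπ hcπ
end

section
/- With the same setup, the linear map θ_c : ℂ[G] → ℂ^c[G] defined by σ ↦ (1/|G|) Σ_{γ∈G} [γ,σ⁻¹]_c⁻¹ U_γ is a morphism of G-modules from the left regular representation to the conjugation representation on the twisted group algebra. Moreover θ_c(τ) = τ·θ_c(1) for all τ ∈ G. -/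
/-!
The cocycle identity makes `γ ↦ [σ, γ]_c` a crossed homomorphism for the conjugation action:
`[σ, γδ]_c = [σ, δ]_c [δσδ⁻¹, γ]_c`. Reindexing the sum defining `θ_c(τ · f)` by `σ ↦ τ⁻¹σ` and
applying this identity pulls out exactly the factor `[τ⁻¹δτ, τ]_c` of the conjugation action.
The second claim is the first one applied to `f = U_1`, since `τ · U_1 = U_τ`.
-/

section TwistedComm

variable {G M : Type*} [Group G] [CommGroup M]

/-- The paper's `[σ, γ]_c`. -/
def twistedComm (c : G → G → M) (σ γ : G) : M :=
  c γ σ / c (γ * σ * γ⁻¹) γ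

theorem twistedComm_mul_right (c : G → G → M)
    (hc : ∀ σ γ τ : G, c σ γ * c (σ * γ) τ = c γ τ * c σ (γ * τ)) (σ γ δ : G) :
    twistedComm c σ (γ * δ) = twistedComm c σ δ * twistedComm c (δ * σ * δ⁻¹) γ := by
  set s := δ * σ * δ⁻¹
  set t := γ * s * γ⁻¹
  have h₁ := hc γ δ σ
  have h₂ := hc γ s δ
  have h₃ := hc t γ δ
  rw [show s * δ = δ * σ by simp only [s]; group] at h₂
  rw [show t * γ = γ * s by simp only [t]; group] at h₃
  have key : c (γ * δ) σ * (c s δ * c t γ) = c δ σ * c γ s * c t (γ * δ) := by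
    refine mul_left_cancel (a := c γ δ) ?_
    calc c γ δ * (c (γ * δ) σ * (c s δ * c t γ))
        = (c γ δ * c (γ * δ) σ) * c s δ * c t γ := by ac_rfl
      _ = c δ σ * (c s δ * c γ (δ * σ)) * c t γ := by rw [h₁]; ac_rfl
      _ = c δ σ * c γ s * (c t γ * c (γ * s) δ) := by rw [← h₂]; ac_rfl
      _ = c γ δ * (c δ σ * c γ s * c t (γ * δ)) := by rw [h₃]; ac_rfl
  rw [twistedComm, twistedComm, twistedComm, div_mul_div_comm, div_eq_div_iff_mul_eq_mul,
    show γ * δ * σ * (γ * δ)⁻¹ = t by simp only [t, s]; group]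
  exact key

theorem sum_mul_left_inv_twistedComm {K : Type*} [Field K] [Fintype G] (c : G → G → Kˣ)
    (hc : ∀ σ γ τ : G, c σ γ * c (σ * γ) τ = c γ τ * c σ (γ * τ)) (f : G → K) (τ δ : G) :
    ∑ σ : G, f (τ⁻¹ * σ) * ((twistedComm c δ σ⁻¹ : Kˣ) : K)⁻¹ =
      ((twistedComm c (τ⁻¹ * δ * τ) τ : Kˣ) : K) *
        ∑ σ : G, f σ * ((twistedComm c (τ⁻¹ * δ * τ) σ⁻¹ : Kˣ) : K)⁻¹ := by
  rw [Finset.mul_sum]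
  refine Fintype.sum_equiv (Equiv.mulLeft τ⁻¹) _ _ fun σ => ?_
  have h := twistedComm_mul_right c hc (τ⁻¹ * δ * τ) σ⁻¹ τ
  rw [show τ * (τ⁻¹ * δ * τ) * τ⁻¹ = δ by group] at h
  simp only [Equiv.coe_mulLeft, mul_inv_rev, inv_inv, h, Units.val_mul]
  field_simp

end TwistedComm

theorem stmt12_general {G : Type} [Group G] [Fintype G] [DecidableEq G]
    (c : G → G → ℂˣ)
    (hcoc : ∀ σ γ τ : G, c σ γ * c (σ * γ) τ = c γ τ * c σ (γ * τ))
    (α : G → G → ℂˣ) (hα : ∀ σ γ : G, α σ γ = c γ σ * (c (γ * σ * γ⁻¹) γ)⁻¹)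
    (conj : G → (G → ℂ) → (G → ℂ))
    (hconj : ∀ (τ : G) (f : G → ℂ) (δ : G),
      conj τ f δ = (α (τ⁻¹ * δ * τ) τ : ℂ) * f (τ⁻¹ * δ * τ))
    (reg : G → (G → ℂ) → (G → ℂ))
    (hreg : ∀ (τ : G) (f : G → ℂ) (δ : G), reg τ f δ = f (τ⁻¹ * δ))
    (θ : (G → ℂ) → (G → ℂ))
    (hθ : ∀ (f : G → ℂ) (δ : G),
      θ f δ = (Fintype.card G : ℂ)⁻¹ * ∑ σ : G, f σ * ((α δ σ⁻¹ : ℂ))⁻¹)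
    (U : G → (G → ℂ)) (hU : ∀ γ δ : G, U γ δ = if δ = γ then 1 else 0) :
    (∀ (τ : G) (f : G → ℂ), θ (reg τ f) = conj τ (θ f)) ∧
    (∀ τ : G, θ (U τ) = conj τ (θ (U 1))) := by
  obtain rfl : α = twistedComm c := funext₂ fun σ γ => by rw [hα, twistedComm, div_eq_mul_inv]
  have equivariant (τ : G) (f : G → ℂ) : θ (reg τ f) = conj τ (θ f) := by
    funext δ
    simp only [hθ, hconj, hreg, sum_mul_left_inv_twistedComm c hcoc]
    ring
  refine ⟨equivariant, fun τ => ?_⟩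
  have reg_U_one : reg τ (U 1) = U τ := by
    funext δ
    simp only [hreg, hU, inv_mul_eq_one, eq_comm]
  rw [← reg_U_one, equivariant]

theorem stmt12 {G : Type} [Group G] [Fintype G] [DecidableEq G]
    (c : G → G → ℂˣ)
    (hcoc : ∀ σ γ τ : G, c σ γ * c (σ * γ) τ = c γ τ * c σ (γ * τ))
    (α : G → G → ℂˣ) (hα : ∀ σ γ : G, α σ γ = c γ σ * (c (γ * σ * γ⁻¹) γ)⁻¹)
    (conj : G → (G → ℂ) → (G → ℂ))
    (hconj : ∀ (τ : G) (f : G → ℂ) (δ : G),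
      conj τ f δ = (α (τ⁻¹ * δ * τ) τ : ℂ) * f (τ⁻¹ * δ * τ))
    (reg : G → (G → ℂ) → (G → ℂ))
    (hreg : ∀ (τ : G) (f : G → ℂ) (δ : G), reg τ f δ = f (τ⁻¹ * δ))
    (ψ : (G → ℂ) → (G → ℂ))
    (hψ : ∀ (f : G → ℂ) (δ : G), ψ f δ = ∑ γ : G, f γ * (α γ δ⁻¹ : ℂ))
    (θ : (G → ℂ) → (G → ℂ))
    (hθ : ∀ (f : G → ℂ) (δ : G),
      θ f δ = (Fintype.card G : ℂ)⁻¹ * ∑ σ : G, f σ * ((α δ σ⁻¹ : ℂ))⁻¹)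
    (U : G → (G → ℂ)) (hU : ∀ γ δ : G, U γ δ = if δ = γ then 1 else 0) :
    (∀ (τ : G) (f : G → ℂ), θ (reg τ f) = conj τ (θ f)) ∧
    (∀ τ : G, θ (U τ) = conj τ (θ (U 1))) :=
  stmt12_general c hcoc α hα conj hconj reg hreg θ hθ U hU
end

section
/- Let G be a finite group and c ∈ Z²(G,ℂ*) a 2-cocycle such that Σ_{γ∈G} [γ,τ]_c = 0 for every non-trivial τ ∈ G. Then ψ_c : ℂ^c[G] → ℂ[G] is an isomorphism of G-modules with inverse θ_c. Consequently the conjugation G-module ℂ^c[G] is isomorphic to the regular representation ℂ[G]. -/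
/-!
Write `[σ, γ]` for `c(γ, σ) c(γσγ⁻¹, γ)⁻¹`. The cocycle identity makes `γ ↦ [σ, γ]` a crossed
homomorphism, `[σ, xτ] = [σ, τ] [τστ⁻¹, x]`. Hence `[γ, σ⁻¹]⁻¹ [γ, δ⁻¹] = [σ⁻¹γσ, δ⁻¹σ]`, and
summing over `γ` the hypothesis gives the orthogonality relation
`∑_γ [γ, σ⁻¹]⁻¹ [γ, δ⁻¹] = |G| δ_{σδ}`, i.e. the matrices of `θ_c` and `ψ_c` are mutually inverse.
The same crossed-homomorphism identity turns conjugation on `ℂ^c[G]` into left multiplication.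
-/

open Matrix

namespace TwistedGroupAlgebra

variable {G : Type*} [Group G]

section CommGroup

variable {M : Type*} [CommGroup M]

def IsTwoCocycle (c : G → G → M) : Prop :=
  ∀ σ γ τ, c σ γ * c (σ * γ) τ = c γ τ * c σ (γ * τ)

def bracket (c : G → G → M) (σ γ : G) : M := c γ σ * (c (γ * σ * γ⁻¹) γ)⁻¹

variable {c : G → G → M}

theorem cocycle_one_left (hc : IsTwoCocycle c) (τ : G) : c 1 τ = c 1 1 := by
  simpa using (hc 1 1 τ).symm

theorem cocycle_one_right (hc : IsTwoCocycle c) (σ : G) : c σ 1 = c 1 1 := by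
  simpa [mul_comm] using hc σ 1 1

theorem bracket_one_right (hc : IsTwoCocycle c) (σ : G) : bracket c σ 1 = 1 := by
  simp [bracket, cocycle_one_left hc σ, cocycle_one_right hc σ]

theorem bracket_mul_right (hc : IsTwoCocycle c) (σ τ x : G) :
    bracket c σ (x * τ) = bracket c σ τ * bracket c (τ * σ * τ⁻¹) x := by
  have e₁ := congrArg Additive.ofMul (hc x τ σ)
  have e₂ := congrArg Additive.ofMul (hc (x * (τ * σ * τ⁻¹) * x⁻¹) x τ)
  have e₃ := congrArg Additive.ofMul (hc x (τ * σ * τ⁻¹) τ)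
  rw [show x * (τ * σ * τ⁻¹) * x⁻¹ * x = x * (τ * σ * τ⁻¹) by group] at e₂
  rw [show τ * σ * τ⁻¹ * τ = τ * σ by group] at e₃
  -- in `Additive M` the goal is a ℤ-linear combination of the three cocycle relations
  apply Additive.ofMul.injective
  simp only [bracket, ofMul_mul, ofMul_inv] at e₁ e₂ e₃ ⊢
  rw [show x * τ * σ * (x * τ)⁻¹ = x * (τ * σ * τ⁻¹) * x⁻¹ by group]
  linear_combination (norm := module) e₁ + e₂ - e₃

theorem inv_bracket_mul_bracket (hc : IsTwoCocycle c) (γ σ δ : G) :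
    (bracket c γ σ⁻¹)⁻¹ * bracket c γ δ⁻¹ = bracket c (σ⁻¹ * γ * σ) (δ⁻¹ * σ) := by
  rw [inv_mul_eq_iff_eq_mul]
  simpa using bracket_mul_right hc γ σ⁻¹ (δ⁻¹ * σ)

end CommGroup

variable [Fintype G] {R : Type*} [CommRing R] {c : G → G → Rˣ}

theorem sum_inv_bracket_mul_bracket [DecidableEq G] (hc : IsTwoCocycle c)
    (hsum : ∀ τ : G, τ ≠ 1 → ∑ γ : G, ((bracket c γ τ : Rˣ) : R) = 0) (σ δ : G) :
    ∑ γ : G, (((bracket c γ σ⁻¹)⁻¹ : Rˣ) : R) * ((bracket c γ δ⁻¹ : Rˣ) : R) =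
      if σ = δ then (Fintype.card G : R) else 0 := by
  simp_rw [← Units.val_mul, inv_bracket_mul_bracket hc]
  rw [Fintype.sum_equiv (MulAut.conj σ⁻¹).toEquiv _ (fun γ ↦ ((bracket c γ (δ⁻¹ * σ) : Rˣ) : R))
    fun γ ↦ by simp]
  split_ifs with h
  · simp [h, bracket_one_right hc]
  · exact hsum _ fun h' ↦ h (inv_mul_eq_one.mp h').symm

def twistedConj (c : G → G → Rˣ) (τ : G) (f : G → R) (δ : G) : R :=
  (bracket c (τ⁻¹ * δ * τ) τ : Rˣ) * f (τ⁻¹ * δ * τ)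

/-- Row `γ` holds the coefficients of `ψ_c(U_γ)`, so that `ψ_c f = f ᵥ* psiMatrix c`; likewise
row `σ` of `thetaMatrix c` holds those of `θ_c(σ)`. -/
def psiMatrix (c : G → G → Rˣ) : Matrix G G R := of fun γ σ ↦ ((bracket c γ σ⁻¹ : Rˣ) : R)

theorem vecMul_twistedConj_psiMatrix (hc : IsTwoCocycle c) (τ : G) (f : G → R) (δ : G) :
    vecMul (twistedConj c τ f) (psiMatrix c) δ = vecMul f (psiMatrix c) (τ⁻¹ * δ) := by
  simp only [vecMul, dotProduct, twistedConj, psiMatrix, of_apply, _root_.mul_inv_rev, inv_inv]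
  rw [← Equiv.sum_comp (MulAut.conj τ).toEquiv]
  refine Finset.sum_congr rfl fun x _ ↦ ?_
  simp only [MulEquiv.toEquiv_eq_coe, MulEquiv.coe_toEquiv, MulAut.conj_apply,
    show τ⁻¹ * (τ * x * τ⁻¹) * τ = x by group, bracket_mul_right hc x τ δ⁻¹, Units.val_mul]
  ring

section Field

variable {K : Type*} [Field K] {c : G → G → Kˣ}

def thetaMatrix (c : G → G → Kˣ) : Matrix G G K :=
  of fun σ γ ↦ (Fintype.card G : K)⁻¹ * (((bracket c γ σ⁻¹)⁻¹ : Kˣ) : K)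

theorem thetaMatrix_mul_psiMatrix [DecidableEq G] (hc : IsTwoCocycle c)
    (hsum : ∀ τ : G, τ ≠ 1 → ∑ γ : G, ((bracket c γ τ : Kˣ) : K) = 0)
    (hcard : (Fintype.card G : K) ≠ 0) : thetaMatrix c * psiMatrix c = 1 := by
  ext σ δ
  simp only [mul_apply, thetaMatrix, psiMatrix, of_apply, mul_assoc, ← Finset.mul_sum,
    sum_inv_bracket_mul_bracket hc hsum, one_apply]
  split_ifs <;> simp [hcard]

theorem psiMatrix_mul_thetaMatrix [DecidableEq G] (hc : IsTwoCocycle c)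
    (hsum : ∀ τ : G, τ ≠ 1 → ∑ γ : G, ((bracket c γ τ : Kˣ) : K) = 0)
    (hcard : (Fintype.card G : K) ≠ 0) : psiMatrix c * thetaMatrix c = 1 :=
  mul_eq_one_comm.mp (thetaMatrix_mul_psiMatrix hc hsum hcard)

end Field

end TwistedGroupAlgebra

open TwistedGroupAlgebra

theorem stmt13 {G : Type} [Group G] [Fintype G]
    (c : G → G → ℂˣ)
    (hcoc : ∀ σ γ τ : G, c σ γ * c (σ * γ) τ = c γ τ * c σ (γ * τ))
    (α : G → G → ℂˣ) (hα : ∀ σ γ : G, α σ γ = c γ σ * (c (γ * σ * γ⁻¹) γ)⁻¹)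
    (conj : G → (G → ℂ) → (G → ℂ))
    (hconj : ∀ (τ : G) (f : G → ℂ) (δ : G),
      conj τ f δ = (α (τ⁻¹ * δ * τ) τ : ℂ) * f (τ⁻¹ * δ * τ))
    (reg : G → (G → ℂ) → (G → ℂ))
    (hreg : ∀ (τ : G) (f : G → ℂ) (δ : G), reg τ f δ = f (τ⁻¹ * δ))
    (ψ : (G → ℂ) → (G → ℂ))
    (hψ : ∀ (f : G → ℂ) (δ : G), ψ f δ = ∑ γ : G, f γ * (α γ δ⁻¹ : ℂ))
    (θ : (G → ℂ) → (G → ℂ))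
    (hθ : ∀ (f : G → ℂ) (δ : G),
      θ f δ = (Fintype.card G : ℂ)⁻¹ * ∑ σ : G, f σ * ((α δ σ⁻¹ : ℂ))⁻¹)
    (hsum : ∀ τ : G, τ ≠ 1 → ∑ γ : G, ((α γ τ : ℂ)) = 0) :
    (∀ f : G → ℂ, θ (ψ f) = f) ∧ (∀ f : G → ℂ, ψ (θ f) = f) ∧
    Function.Bijective ψ ∧
    (∀ (τ : G) (f : G → ℂ), ψ (conj τ f) = reg τ (ψ f)) := by
  classical
  obtain rfl : α = bracket c := funext₂ hα
  obtain rfl : conj = twistedConj c := funext₃ hconj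
  have hcard : (Fintype.card G : ℂ) ≠ 0 := Nat.cast_ne_zero.2 Fintype.card_ne_zero
  have hψ_eq (f : G → ℂ) : ψ f = vecMul f (psiMatrix c) := funext (hψ f)
  have hθ_eq (f : G → ℂ) : θ f = vecMul f (thetaMatrix c) := funext fun δ ↦ by
    simp [hθ, vecMul, dotProduct, thetaMatrix, Finset.mul_sum, mul_left_comm]
  have hθψ (f : G → ℂ) : θ (ψ f) = f := by
    rw [hψ_eq, hθ_eq, vecMul_vecMul, psiMatrix_mul_thetaMatrix hcoc hsum hcard, vecMul_one]
  have hψθ (f : G → ℂ) : ψ (θ f) = f := by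
    rw [hθ_eq, hψ_eq, vecMul_vecMul, thetaMatrix_mul_psiMatrix hcoc hsum hcard, vecMul_one]
  refine ⟨hθψ, hψθ, Function.bijective_iff_has_inverse.mpr ⟨θ, hθψ, hψθ⟩, fun τ f ↦ ?_⟩
  funext δ
  rw [hreg, hψ_eq, hψ_eq, vecMul_twistedConj_psiMatrix hcoc]
end

section
/- Let 1 → A → G → Q → 1 be an extension of finite groups with A abelian, and let π : Q → Â be a bijective 1-cocycle with [β]∪[π] = 0 in H³(Q,ℂ*). Then the 2-cocycle c_π ∈ Z²(G,ℂ*) satisfies Σ_{γ∈G} [γ,aḡ]_{c_π} = 0 for every non-trivial element aḡ ∈ G; consequently ℂ^{c_π}[G] ≅ ℂ[G] as G-modules and c_π is non-degenerate (the twisted group algebra ℂ^{c_π}[G] is a matrix algebra), so G is a group of central type. -/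
/-!
Write `γ = i(a) s(g)`. Translating `γ` by `i(a)` multiplies the twisted commutator
`[γ, τ]_{c_π}` by `π_{p τ}(p τ · a)⁻¹`, a character of `A` that is nontrivial unless `p τ = 1`,
because `π` is injective; and for `τ = i(b)` one finds `[γ, τ]_{c_π} = π_{(p γ)⁻¹}(b⁻¹)`, whose sum
over `Q` vanishes because `π` is onto `Â`. These orthogonality relations make
`f ↦ ∑_γ f(γ) [γ, δ⁻¹]_{c_π}` an isomorphism from the conjugation module onto the regular one.

For the matrix algebra, the monomial matrices
`ρ(γ) e_q = ζ(p γ, q) π_{p γ q}(β(p γ, q) r(γ)) e_{p γ q}` on `ℂ^Q` form a projective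
representation with cocycle `c_π`, which is where `δζ = π ∪ β` enters. Its linear extension to
`ℂ^{c_π}[G]` is injective by Fourier inversion on `A`, hence bijective since
`|G| = |A| |Q| = |Q|²`.
-/

open scoped BigOperators

open Finset

section CharacterSums

theorem Fintype.sum_eq_zero_of_comp_equiv_eq_mul {X R : Type*} [Fintype X] [CommRing R]
    [IsDomain R] (e : X ≃ X) {f : X → R} {u : R} (hu : u ≠ 1) (hf : ∀ x, f (e x) = u * f x) :
    ∑ x, f x = 0 := by
  have h : u * ∑ x, f x = 1 * ∑ x, f x := by
    simp only [mul_sum, ← hf, one_mul, e.sum_comp f]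
  exact (mul_eq_mul_right_iff.mp h).resolve_left hu

instance Complex.hasEnoughRootsOfUnity_exponent (A : Type*) [Group A] [Finite A] :
    HasEnoughRootsOfUnity ℂ (Monoid.exponent A) :=
  have : NeZero (Monoid.exponent A : ℂ) :=
    ⟨Nat.cast_ne_zero.mpr Monoid.exponent_ne_zero_of_finite⟩
  inferInstance

variable {A Q : Type*} [CommGroup A] [Fintype A] [Fintype Q] {π : Q → A →* ℂˣ}

theorem card_eq_card_of_bijective (hπ : Function.Bijective π) :
    Fintype.card Q = Fintype.card A := by
  rw [← Nat.card_eq_fintype_card, ← Nat.card_eq_fintype_card, Nat.card_eq_of_bijective π hπ,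
    CommGroup.card_monoidHom_of_hasEnoughRootsOfUnity]

theorem sum_apply_eq_zero_of_bijective (hπ : Function.Bijective π) {a : A} (ha : a ≠ 1) :
    ∑ q, (π q a : ℂ) = 0 := by
  have := Fintype.ofFinite (A →* ℂˣ)
  obtain ⟨χ, hχ⟩ := CommGroup.exists_apply_ne_one_of_hasEnoughRootsOfUnity A ℂ ha
  rw [Fintype.sum_bijective π hπ _ (fun χ => (χ a : ℂ)) fun _ => rfl]
  refine Fintype.sum_eq_zero_of_comp_equiv_eq_mul (Equiv.mulLeft χ) (u := (χ a : ℂ))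
    (by rwa [Ne, Units.val_eq_one]) fun φ => ?_
  simp

theorem eq_zero_of_forall_sum_mul_apply_eq_zero (hπ : Function.Bijective π)
    {F : A → ℂ} (hF : ∀ q, ∑ a, F a * π q a = 0) : F = 0 := by
  classical
  have : Nonempty Q := ⟨(hπ.2 1).choose⟩
  funext a₀
  have key : ∑ a, F a * ∑ q, (π q (a * a₀⁻¹) : ℂ) = 0 := by
    simp_rw [mul_sum, map_mul, map_inv, Units.val_mul, ← mul_assoc]
    rw [sum_comm]
    simp_rw [← sum_mul, hF, zero_mul, sum_const_zero]
  rw [← sum_erase_add _ _ (mem_univ a₀), sum_eq_zero fun a ha => ?_] at key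
  · simpa using key
  · rw [sum_apply_eq_zero_of_bijective hπ (mul_inv_eq_one.not.mpr (ne_of_mem_erase ha)), mul_zero]

end CharacterSums

section TwistedCommutator

variable {G M : Type*} [Group G] [CommGroup M] {c : G → G → M}

def IsTwoCocycle (c : G → G → M) : Prop :=
  ∀ x y z, c x y * c (x * y) z = c y z * c x (y * z)

/-- The paper's `[σ, γ]_c`. -/
def twistedCommutator (c : G → G → M) (σ γ : G) : M :=
  c γ σ * (c (γ * σ * γ⁻¹) γ)⁻¹

theorem IsTwoCocycle.map_one_left (hc : IsTwoCocycle c) (y : G) : c 1 y = c 1 1 := by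
  simpa using (hc 1 1 y).symm

theorem IsTwoCocycle.map_one_right (hc : IsTwoCocycle c) (x : G) : c x 1 = c 1 1 := by
  simpa using hc x 1 1

theorem IsTwoCocycle.twistedCommutator_one_right (hc : IsTwoCocycle c) (σ : G) :
    twistedCommutator c σ 1 = 1 := by
  simp [twistedCommutator, hc.map_one_left σ, hc.map_one_right σ]

theorem IsTwoCocycle.twistedCommutator_mul_right (hc : IsTwoCocycle c) (g σ τ : G) :
    twistedCommutator c g (σ * τ) =
      twistedCommutator c g τ * twistedCommutator c (τ * g * τ⁻¹) σ := by
  set h := τ * g * τ⁻¹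
  set k := σ * h * σ⁻¹
  have hk : σ * τ * g * (σ * τ)⁻¹ = k := by simp only [h, k]; group
  have hhτ : h * τ = τ * g := by simp only [h]; group
  have hkσ : k * σ = σ * h := by simp only [k]; group
  have key : c (σ * τ) g * c h τ * c k σ = c τ g * c σ h * c k (σ * τ) := by
    refine mul_right_cancel (b := c σ τ) ?_
    calc c (σ * τ) g * c h τ * c k σ * c σ τ
        = (c σ τ * c (σ * τ) g) * c h τ * c k σ := by ac_rfl
      _ = c τ g * c k σ * (c h τ * c σ (h * τ)) := by rw [hc, hhτ]; ac_rfl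
      _ = c τ g * c σ h * (c k σ * c (k * σ) τ) := by rw [← hc, hkσ]; ac_rfl
      _ = c τ g * c σ h * c k (σ * τ) * c σ τ := by rw [hc]; ac_rfl
  simp only [twistedCommutator, hk, ← div_eq_mul_inv (G := M), div_mul_div_comm,
    div_eq_div_iff_mul_eq_mul]
  rw [← key]
  exact (mul_assoc _ _ _).symm

end TwistedCommutator

section TwistedGroupAlgebra

variable {G K : Type*} [Group G] [Fintype G] [Field K] {c : G → G → Kˣ}

def twistedConj (c : G → G → Kˣ) (τ : G) (f : G → K) (δ : G) : K :=
  twistedCommutator c (τ⁻¹ * δ * τ) τ * f (τ⁻¹ * δ * τ)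

def commutatorTransform (c : G → G → Kˣ) : (G → K) →ₗ[K] (G → K) :=
  (Matrix.of fun γ δ => ((twistedCommutator c γ δ⁻¹ : Kˣ) : K)).vecMulLinear

theorem commutatorTransform_apply (f : G → K) (δ : G) :
    commutatorTransform c f δ = ∑ γ, f γ * twistedCommutator c γ δ⁻¹ := by
  simp [commutatorTransform, Matrix.vecMul, dotProduct]

theorem IsTwoCocycle.commutatorTransform_twistedConj (hc : IsTwoCocycle c) (τ : G)
    (f : G → K) (δ : G) :
    commutatorTransform c (twistedConj c τ f) δ = commutatorTransform c f (τ⁻¹ * δ) := by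
  simp only [commutatorTransform_apply, twistedConj]
  refine Fintype.sum_equiv (MulAut.conj τ⁻¹).toEquiv _ _ fun γ => ?_
  have h₁ : (τ⁻¹ * δ)⁻¹ = δ⁻¹ * τ := by group
  have h₂ : τ * (τ⁻¹ * γ * τ) * τ⁻¹ = γ := by group
  simp only [MulEquiv.toEquiv_eq_coe, MulEquiv.coe_toEquiv, MulAut.conj_apply, inv_inv, h₁,
    hc.twistedCommutator_mul_right, h₂, Units.val_mul]
  ring

theorem IsTwoCocycle.commutatorTransform_twistedConj_one [DecidableEq G] (hc : IsTwoCocycle c)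
    (horth : ∀ τ ≠ 1, ∑ γ, ((twistedCommutator c γ τ : Kˣ) : K) = 0) (τ : G) :
    commutatorTransform c (twistedConj c τ 1) = Pi.single τ (Fintype.card G : K) := by
  funext δ
  rw [hc.commutatorTransform_twistedConj, commutatorTransform_apply]
  by_cases hδ : δ = τ
  · subst hδ
    simp [hc.twistedCommutator_one_right]
  · rw [Pi.single_apply, if_neg hδ]
    simpa using horth _ (by simpa [inv_mul_eq_one, eq_comm] using hδ)

theorem IsTwoCocycle.commutatorTransform_bijective [CharZero K] (hc : IsTwoCocycle c)
    (horth : ∀ τ ≠ 1, ∑ γ, ((twistedCommutator c γ τ : Kˣ) : K) = 0) :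
    Function.Bijective (commutatorTransform c) := by
  suffices Function.Surjective (commutatorTransform c) from
    ⟨LinearMap.injective_iff_surjective.mpr this, this⟩
  classical
  intro v
  refine ⟨∑ τ, (v τ / Fintype.card G) • twistedConj c τ 1, funext fun δ => ?_⟩
  simp [hc.commutatorTransform_twistedConj_one horth, Pi.single_apply]

def twistedConv (c : G → G → Kˣ) (f h : G → K) (δ : G) : K :=
  ∑ σ, c σ (σ⁻¹ * δ) * f σ * h (σ⁻¹ * δ)

theorem linearCombination_twistedConv {R : Type*} [Ring R] [Algebra K R] {ρ : G → R}
    (hρ : ∀ γ₁ γ₂, ρ γ₁ * ρ γ₂ = (c γ₁ γ₂ : K) • ρ (γ₁ * γ₂)) (f h : G → K) :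
    Fintype.linearCombination K ρ (twistedConv c f h) =
      Fintype.linearCombination K ρ f * Fintype.linearCombination K ρ h := by
  simp only [Fintype.linearCombination_apply]
  calc ∑ δ, twistedConv c f h δ • ρ δ
      = ∑ σ, ∑ δ, (c σ (σ⁻¹ * δ) * f σ * h (σ⁻¹ * δ) : K) • ρ δ := by
        simp only [twistedConv, sum_smul]
        exact sum_comm
    _ = ∑ σ, ∑ γ, (c σ γ * f σ * h γ : K) • ρ (σ * γ) :=
        sum_congr rfl fun σ _ => Fintype.sum_equiv (Equiv.mulLeft σ⁻¹) _ _ (by simp)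
    _ = (∑ σ, f σ • ρ σ) * ∑ γ, h γ • ρ γ := by
        rw [sum_mul]
        refine sum_congr rfl fun σ _ => ?_
        rw [mul_sum]
        refine sum_congr rfl fun γ _ => ?_
        rw [smul_mul_smul_comm, hρ, smul_smul]
        ring_nf

end TwistedGroupAlgebra

/-- Coordinates `γ = i (r γ) * s (p γ)` on an extension `1 → A → G → Q → 1`, given by a normalized
set-theoretic section `s` of `p`, with factor set `β` and induced action `act` of `Q` on `A`. -/
structure ExtensionCoordinates (A G Q : Type*) [CommGroup A] [Group G] [Group Q] where
  i : A →* G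
  p : G →* Q
  s : Q → G
  r : G → A
  β : Q → Q → A
  act : Q → A → A
  i_injective : Function.Injective i
  p_i : ∀ a, p (i a) = 1
  p_s : ∀ q, p (s q) = q
  s_one : s 1 = 1
  i_r_mul_s_p : ∀ γ, i (r γ) * s (p γ) = γ
  s_mul_s : ∀ g₁ g₂, s g₁ * s g₂ = i (β g₁ g₂) * s (g₁ * g₂)
  i_act : ∀ g a, i (act g a) = s g * i a * (s g)⁻¹

namespace ExtensionCoordinates

variable {A G Q : Type*} [CommGroup A] [Group G] [Group Q] (X : ExtensionCoordinates A G Q)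

theorem p_i_mul_s (a : A) (g : Q) : X.p (X.i a * X.s g) = g := by
  rw [map_mul, X.p_i, X.p_s, one_mul]

theorem r_i_mul_s (a : A) (g : Q) : X.r (X.i a * X.s g) = a := by
  have h := X.i_r_mul_s_p (X.i a * X.s g)
  rw [X.p_i_mul_s] at h
  exact X.i_injective (mul_right_cancel h)

theorem r_i (b : A) : X.r (X.i b) = b := by
  simpa [X.s_one] using X.r_i_mul_s b 1

theorem r_i_mul (a : A) (γ : G) : X.r (X.i a * γ) = a * X.r γ := by
  conv_lhs => rw [← X.i_r_mul_s_p γ, ← mul_assoc, ← map_mul]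
  exact X.r_i_mul_s _ _

theorem act_one (a : A) : X.act 1 a = a :=
  X.i_injective (by simp [X.i_act, X.s_one])

theorem act_mul (g : Q) (a b : A) : X.act g (a * b) = X.act g a * X.act g b :=
  X.i_injective (by simp only [map_mul, X.i_act]; group)

theorem act_act (g h : Q) (a : A) : X.act g (X.act h a) = X.act (g * h) a := by
  apply X.i_injective
  have hβ : X.s g * X.s h = X.i (X.β g h) * X.s (g * h) := X.s_mul_s g h
  calc X.i (X.act g (X.act h a))
      = (X.s g * X.s h) * X.i a * (X.s g * X.s h)⁻¹ := by simp only [X.i_act]; group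
    _ = X.i (X.β g h) * X.i (X.act (g * h) a) * (X.i (X.β g h))⁻¹ := by
        rw [hβ, X.i_act]; group
    _ = X.i (X.act (g * h) a) := by
        rw [← map_inv, ← map_mul, ← map_mul, mul_comm (X.β g h), mul_inv_cancel_right]

theorem act_inv_act (g : Q) (a : A) : X.act g⁻¹ (X.act g a) = a := by
  rw [act_act, inv_mul_cancel, act_one]

theorem act_act_inv (g : Q) (a : A) : X.act g (X.act g⁻¹ a) = a := by
  rw [act_act, mul_inv_cancel, act_one]

theorem r_mul (x y : G) : X.r (x * y) = X.r x * X.act (X.p x) (X.r y) * X.β (X.p x) (X.p y) := by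
  have h : x * y =
      X.i (X.r x * X.act (X.p x) (X.r y) * X.β (X.p x) (X.p y)) * X.s (X.p (x * y)) := by
    conv_lhs => rw [← X.i_r_mul_s_p x, ← X.i_r_mul_s_p y]
    simp only [map_mul, X.i_act]
    rw [mul_assoc _ (X.i (X.β _ _)), ← X.s_mul_s]
    group
  rw [h, X.r_i_mul_s]

theorem β_mul (g h k : Q) :
    X.β g h * X.β (g * h) k = X.act g (X.β h k) * X.β g (h * k) := by
  have e₁ : X.s g * X.s h * X.s k = X.i (X.β g h * X.β (g * h) k) * X.s (g * h * k) := by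
    rw [X.s_mul_s, mul_assoc, X.s_mul_s, ← mul_assoc, ← map_mul]
  have e₂ : X.s g * (X.s h * X.s k) =
      X.i (X.act g (X.β h k) * X.β g (h * k)) * X.s (g * (h * k)) := by
    calc X.s g * (X.s h * X.s k)
        = X.s g * X.i (X.β h k) * (X.s g)⁻¹ * (X.s g * X.s (h * k)) := by
          rw [X.s_mul_s h k]; group
      _ = _ := by rw [← X.i_act, X.s_mul_s, ← mul_assoc, ← map_mul]
  rw [mul_assoc, mul_assoc, e₂] at e₁
  exact X.i_injective (mul_right_cancel e₁.symm)

def prodEquiv : A × Q ≃ G where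
  toFun x := X.i x.1 * X.s x.2
  invFun γ := (X.r γ, X.p γ)
  left_inv x := by simp [X.r_i_mul_s, X.p_i_mul_s]
  right_inv := X.i_r_mul_s_p

theorem sum_eq_sum_sum {M : Type*} [AddCommMonoid M] [Fintype A] [Fintype G] [Fintype Q]
    (f : G → M) : ∑ γ, f γ = ∑ a, ∑ g, f (X.i a * X.s g) := by
  rw [← X.prodEquiv.sum_comp, Fintype.sum_prod_type]
  rfl

variable {M : Type*} [CommGroup M]

/-- `π` is a 1-cocycle `Q → Â` for the action `(g • χ) a = χ (g⁻¹ • a)`. -/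
def IsDualCocycle (π : Q → A →* M) : Prop :=
  ∀ g₁ g₂ a, π (g₁ * g₂) a = π g₁ a * π g₂ (X.act g₁⁻¹ a)

/-- `δ²ζ = π ∪ β`, so that `ζ` witnesses `[β] ∪ [π] = 0`. -/
def CoboundsCup (π : Q → A →* M) (ζ : Q → Q → M) : Prop :=
  ∀ g₁ g₂ g₃, ζ g₂ g₃ * (ζ (g₁ * g₂) g₃)⁻¹ * ζ g₁ (g₂ * g₃) * (ζ g₁ g₂)⁻¹ =
    π g₁ (X.act g₁ (X.β g₂ g₃))

/-- The paper's `c_π = φ_π · ζ̄_π`. -/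
def cocycleOfDual (π : Q → A →* M) (ζ : Q → Q → M) (γ₁ γ₂ : G) : M :=
  (π (X.p γ₁) (X.act (X.p γ₁) (X.r γ₂)))⁻¹ * ζ (X.p γ₁) (X.p γ₂)

variable {X} {π : Q → A →* M} {ζ : Q → Q → M}

theorem IsDualCocycle.map_one (hπ : X.IsDualCocycle π) : π 1 = 1 := by
  ext a
  simpa [X.act_one] using hπ 1 1 a

theorem IsDualCocycle.mul_apply_act (hπ : X.IsDualCocycle π) (g h : Q) (a : A) :
    π (g * h) (X.act g a) = π g (X.act g a) * π h a := by
  rw [hπ, X.act_inv_act]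

theorem IsDualCocycle.apply_act (hπ : X.IsDualCocycle π) (g : Q) (a : A) :
    π g (X.act g a) = (π g⁻¹ a)⁻¹ := by
  rw [eq_inv_iff_mul_eq_one, ← hπ.mul_apply_act, mul_inv_cancel, hπ.map_one, MonoidHom.one_apply]

theorem CoboundsCup.mul_eq (hζ : X.CoboundsCup π ζ) (g₁ g₂ g₃ : Q) :
    ζ g₂ g₃ * ζ g₁ (g₂ * g₃) = π g₁ (X.act g₁ (X.β g₂ g₃)) * (ζ g₁ g₂ * ζ (g₁ * g₂) g₃) := by
  rw [← hζ, ← mul_assoc, inv_mul_cancel_right, mul_right_comm, inv_mul_cancel_right]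

theorem isTwoCocycle_cocycleOfDual (hπ : X.IsDualCocycle π) (hζ : X.CoboundsCup π ζ) :
    IsTwoCocycle (X.cocycleOfDual π ζ) := by
  intro x y z
  simp only [cocycleOfDual, map_mul, X.r_mul, ← X.act_act, hπ.mul_apply_act, X.act_mul,
    ← div_eq_inv_mul, div_mul_div_comm, div_eq_div_iff_mul_eq_mul, hζ.mul_eq]
  simp only [mul_assoc, mul_comm, mul_left_comm]

theorem twistedCommutator_cocycleOfDual_i_mul (a : A) (γ τ : G) :
    twistedCommutator (X.cocycleOfDual π ζ) (X.i a * γ) τ =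
      (π (X.p τ) (X.act (X.p τ) a))⁻¹ * twistedCommutator (X.cocycleOfDual π ζ) γ τ := by
  simp only [twistedCommutator, cocycleOfDual, map_mul, map_inv, X.p_i, X.r_i_mul, X.act_mul,
    one_mul, mul_inv]
  simp only [mul_assoc, mul_comm, mul_left_comm]

theorem IsDualCocycle.twistedCommutator_cocycleOfDual_i (hπ : X.IsDualCocycle π)
    (hζ₁ : ∀ g, ζ 1 g = 1 ∧ ζ g 1 = 1) (γ : G) (b : A) :
    twistedCommutator (X.cocycleOfDual π ζ) γ (X.i b) = π (X.p γ)⁻¹ b⁻¹ := by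
  simp [twistedCommutator, cocycleOfDual, X.p_i, X.r_i, hπ.map_one, hζ₁, hπ.apply_act]

theorem sum_twistedCommutator_cocycleOfDual_eq_zero [Fintype A] [Fintype G] [Fintype Q]
    {π : Q → A →* ℂˣ} {ζ : Q → Q → ℂˣ} (hπ : X.IsDualCocycle π) (hπbij : Function.Bijective π)
    (hζ₁ : ∀ g, ζ 1 g = 1 ∧ ζ g 1 = 1) {τ : G} (hτ : τ ≠ 1) :
    ∑ γ, ((twistedCommutator (X.cocycleOfDual π ζ) γ τ : ℂˣ) : ℂ) = 0 := by
  by_cases hpτ : X.p τ = 1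
  · have hτ' : X.i (X.r τ) = τ := by simpa [hpτ, X.s_one] using X.i_r_mul_s_p τ
    have hr : (X.r τ)⁻¹ ≠ 1 := by
      rw [inv_ne_one]
      rintro h
      rw [h, map_one] at hτ'
      exact hτ hτ'.symm
    rw [← hτ', X.sum_eq_sum_sum]
    refine sum_eq_zero fun a _ => ?_
    simp only [hπ.twistedCommutator_cocycleOfDual_i hζ₁, X.p_i_mul_s]
    rw [← sum_apply_eq_zero_of_bijective hπbij hr]
    exact Fintype.sum_equiv (Equiv.inv Q) _ _ fun _ => rfl
  · obtain ⟨b, hb⟩ : ∃ b, π (X.p τ) b ≠ 1 := by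
      by_contra! h
      exact hpτ (hπbij.1 (by rw [hπ.map_one]; exact MonoidHom.ext h))
    refine Fintype.sum_eq_zero_of_comp_equiv_eq_mul (Equiv.mulLeft (X.i (X.act (X.p τ)⁻¹ b)))
      (u := ((π (X.p τ) b)⁻¹ : ℂˣ)) ?_ fun γ => ?_
    · rwa [Ne, Units.val_eq_one, inv_eq_one]
    · rw [Equiv.coe_mulLeft, X.twistedCommutator_cocycleOfDual_i_mul, X.act_act_inv, Units.val_mul]

def projectiveRepCoeff (π : Q → A →* M) (ζ : Q → Q → M) (γ : G) (q : Q) : M :=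
  ζ (X.p γ) q * π (X.p γ * q) (X.β (X.p γ) q) * π (X.p γ * q) (X.r γ)

theorem projectiveRepCoeff_mul (hπ : X.IsDualCocycle π) (hζ : X.CoboundsCup π ζ)
    (γ₁ γ₂ : G) (q : Q) :
    X.projectiveRepCoeff π ζ γ₁ (X.p γ₂ * q) * X.projectiveRepCoeff π ζ γ₂ q =
      X.cocycleOfDual π ζ γ₁ γ₂ * X.projectiveRepCoeff π ζ (γ₁ * γ₂) q := by
  rw [cocycleOfDual, mul_assoc, eq_inv_mul_iff_mul_eq]
  simp only [projectiveRepCoeff, map_mul, X.r_mul, mul_assoc (X.p γ₁), hπ.mul_apply_act]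
  have hβ := congrArg (π (X.p γ₁ * (X.p γ₂ * q))) (X.β_mul (X.p γ₁) (X.p γ₂) q)
  simp only [map_mul, hπ.mul_apply_act] at hβ
  have hζ' := hζ.mul_eq (X.p γ₁) (X.p γ₂) q
  generalize π (X.p γ₁ * (X.p γ₂ * q)) = χ at hβ ⊢
  generalize X.p γ₁ = g₁ at hβ hζ' ⊢
  generalize X.p γ₂ = g₂ at hβ hζ' ⊢
  set Z := π g₁ (X.act g₁ (X.β g₂ q))
  set W := π g₁ (X.act g₁ (X.r γ₂)) * χ (X.r γ₁) * π (g₂ * q) (X.r γ₂)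
  calc _ = (ζ g₂ q * ζ g₁ (g₂ * q)) * (π (g₂ * q) (X.β g₂ q) * χ (X.β g₁ (g₂ * q))) * W := by
        simp only [W, mul_comm, mul_left_comm, mul_assoc]
    _ = ζ g₁ g₂ * ζ (g₁ * g₂) q * (Z * π (g₂ * q) (X.β g₂ q) * χ (X.β g₁ (g₂ * q))) * W := by
        rw [hζ']; simp only [mul_comm, mul_left_comm, mul_assoc]
    _ = _ := by
        rw [← hβ]; simp only [W, mul_comm, mul_left_comm, mul_assoc]

section Representation

variable {K : Type*} [Field K] [Fintype Q] [DecidableEq Q] {π : Q → A →* Kˣ} {ζ : Q → Q → Kˣ}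

def projectiveRep (π : Q → A →* Kˣ) (ζ : Q → Q → Kˣ) (γ : G) : Matrix Q Q K :=
  Matrix.of fun q' q => if q' = X.p γ * q then ((X.projectiveRepCoeff π ζ γ q : Kˣ) : K) else 0

theorem projectiveRep_mul (hπ : X.IsDualCocycle π) (hζ : X.CoboundsCup π ζ) (γ₁ γ₂ : G) :
    X.projectiveRep π ζ γ₁ * X.projectiveRep π ζ γ₂ =
      ((X.cocycleOfDual π ζ γ₁ γ₂ : Kˣ) : K) • X.projectiveRep π ζ (γ₁ * γ₂) := by
  ext q' q
  simp only [projectiveRep, Matrix.mul_apply, Matrix.of_apply, Matrix.smul_apply, mul_ite, ite_mul,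
    zero_mul, mul_zero, sum_ite_eq', mem_univ, if_true, map_mul, mul_assoc, smul_eq_mul]
  rw [← Units.val_mul, ← Units.val_mul, X.projectiveRepCoeff_mul hπ hζ]

theorem linearCombination_projectiveRep_apply [Fintype A] [Fintype G] (f : G → K) (g q : Q) :
    Fintype.linearCombination K (X.projectiveRep π ζ) f (g * q) q =
      ζ g q * π (g * q) (X.β g q) * ∑ a, f (X.i a * X.s g) * π (g * q) a := by
  simp only [Fintype.linearCombination_apply, Matrix.sum_apply, X.sum_eq_sum_sum, mul_sum]
  refine sum_congr rfl fun a _ => ?_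
  rw [sum_eq_single g (fun g' _ hg' => ?_) (by simp)]
  · simp only [projectiveRep, projectiveRepCoeff, X.p_i_mul_s, X.r_i_mul_s, Units.val_mul,
      Matrix.smul_apply, Matrix.of_apply, if_pos, smul_eq_mul]
    ring
  · simp [projectiveRep, X.p_i_mul_s, hg'.symm]

theorem linearCombination_projectiveRep_injective [Fintype A] [Fintype G] {π : Q → A →* ℂˣ}
    {ζ : Q → Q → ℂˣ} (hπ : Function.Bijective π) :
    Function.Injective (Fintype.linearCombination ℂ (X.projectiveRep π ζ)) := by
  rw [← LinearMap.ker_eq_bot, LinearMap.ker_eq_bot']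
  intro f hf
  funext γ
  rw [← X.i_r_mul_s_p γ]
  suffices (fun a => f (X.i a * X.s (X.p γ))) = 0 from congrFun this _
  refine eq_zero_of_forall_sum_mul_apply_eq_zero hπ fun q => ?_
  have h := X.linearCombination_projectiveRep_apply (π := π) (ζ := ζ) f (X.p γ) ((X.p γ)⁻¹ * q)
  rw [hf, mul_inv_cancel_left] at h
  simpa using h.symm

theorem linearCombination_projectiveRep_bijective [Fintype A] [Fintype G] {π : Q → A →* ℂˣ}
    {ζ : Q → Q → ℂˣ} (hπ : Function.Bijective π) :
    Function.Bijective (Fintype.linearCombination ℂ (X.projectiveRep π ζ)) := by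
  have hinj := X.linearCombination_projectiveRep_injective (ζ := ζ) hπ
  refine ⟨hinj, (LinearMap.injective_iff_surjective_of_finrank_eq_finrank ?_).mp hinj⟩
  rw [Module.finrank_fintype_fun_eq_card, Module.finrank_matrix, Module.finrank_self, mul_one,
    ← Fintype.card_congr X.prodEquiv, Fintype.card_prod, card_eq_card_of_bijective hπ]

end Representation

end ExtensionCoordinates

theorem stmt14_general
    {A G Q : Type} [CommGroup A] [Group G] [Group Q]
    [Fintype A] [Fintype G] [Fintype Q]
    (i : A →* G) (p : G →* Q)
    (hi : Function.Injective i)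
    (hker : ∀ γ : G, p γ = 1 ↔ γ ∈ Set.range i)
    (s : Q → G) (hs : ∀ q, p (s q) = q) (hs1 : s 1 = 1)
    (r : G → A) (hr : ∀ γ : G, γ = i (r γ) * s (p γ))
    (β : Q → Q → A) (hβ : ∀ g₁ g₂, s g₁ * s g₂ = i (β g₁ g₂) * s (g₁ * g₂))
    (act : Q → A → A) (hact : ∀ g a, i (act g a) = s g * i a * (s g)⁻¹)
    (π : Q → A → ℂˣ)
    (hπhom : ∀ g a b, π g (a * b) = π g a * π g b)
    (hπcoc : ∀ g₁ g₂ a, π (g₁ * g₂) a = π g₁ a * π g₂ (act g₁⁻¹ a))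
    (Φ : G → G → ℂˣ)
    (hΦ : ∀ γ₁ γ₂, Φ γ₁ γ₂ = (π (p γ₁) (act (p γ₁) (r γ₂)))⁻¹)
    (ζ : Q → Q → ℂˣ)
    (hζ : ∀ g₁ g₂ g₃, ζ g₂ g₃ * (ζ (g₁ * g₂) g₃)⁻¹ * ζ g₁ (g₂ * g₃) * (ζ g₁ g₂)⁻¹
      = π g₁ (act g₁ (β g₂ g₃)))
    (cπ : G → G → ℂˣ)
    (hcπ : ∀ γ₁ γ₂, cπ γ₁ γ₂ = Φ γ₁ γ₂ * ζ (p γ₁) (p γ₂))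
    (hζnorm : ∀ g : Q, ζ 1 g = 1 ∧ ζ g 1 = 1)
    (hπinj : Function.Injective π)
    (hπsurj : ∀ χ : A → ℂˣ, (∀ a b, χ (a * b) = χ a * χ b) → ∃ g : Q, π g = χ)
    (α : G → G → ℂˣ) (hα : ∀ σ γ : G, α σ γ = cπ γ σ * (cπ (γ * σ * γ⁻¹) γ)⁻¹)
    (conj : G → (G → ℂ) → (G → ℂ))
    (hconj : ∀ (τ : G) (f : G → ℂ) (δ : G),
      conj τ f δ = (α (τ⁻¹ * δ * τ) τ : ℂ) * f (τ⁻¹ * δ * τ))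
    (reg : G → (G → ℂ) → (G → ℂ))
    (hreg : ∀ (τ : G) (f : G → ℂ) (δ : G), reg τ f δ = f (τ⁻¹ * δ))
    (ψ : (G → ℂ) → (G → ℂ))
    (hψ : ∀ (f : G → ℂ) (δ : G), ψ f δ = ∑ γ : G, f γ * (α γ δ⁻¹ : ℂ))
    (tm : (G → ℂ) → (G → ℂ) → (G → ℂ))
    (htm : ∀ (f h : G → ℂ) (δ : G),
      tm f h δ = ∑ σ : G, (cπ σ (σ⁻¹ * δ) : ℂ) * f σ * h (σ⁻¹ * δ)) :
    (∀ τ : G, τ ≠ 1 → ∑ γ : G, ((α γ τ : ℂ)) = 0) ∧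
    Function.Bijective ψ ∧
    (∀ (τ : G) (f : G → ℂ), ψ (conj τ f) = reg τ (ψ f)) ∧
    (∃ (n : ℕ) (e : (G → ℂ) ≃ₗ[ℂ] Matrix (Fin n) (Fin n) ℂ),
      ∀ f h : G → ℂ, e (tm f h) = e f * e h) := by
  classical
  let X : ExtensionCoordinates A G Q :=
    ⟨i, p, s, r, β, act, hi, fun a => (hker _).2 ⟨a, rfl⟩, hs, hs1, fun γ => (hr γ).symm, hβ, hact⟩
  let χ : Q → A →* ℂˣ := fun g => MonoidHom.mk' (π g) (hπhom g)
  have hχ : X.IsDualCocycle χ := hπcoc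
  have hχbij : Function.Bijective χ := by
    refine ⟨fun g g' h => hπinj (funext (DFunLike.congr_fun h)), fun φ => ?_⟩
    obtain ⟨g, hg⟩ := hπsurj φ (map_mul φ)
    exact ⟨g, MonoidHom.ext (congrFun hg)⟩
  obtain rfl : cπ = X.cocycleOfDual χ ζ := funext₂ fun γ₁ γ₂ => by rw [hcπ, hΦ]; rfl
  obtain rfl : α = twistedCommutator (X.cocycleOfDual χ ζ) := funext₂ hα
  obtain rfl : ψ = commutatorTransform (X.cocycleOfDual χ ζ) :=
    funext₂ fun f δ => (hψ f δ).trans (commutatorTransform_apply f δ).symm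
  obtain rfl : conj = twistedConj (X.cocycleOfDual χ ζ) := funext₃ hconj
  obtain rfl : reg = fun τ f δ => f (τ⁻¹ * δ) := funext₃ hreg
  obtain rfl : tm = twistedConv (X.cocycleOfDual χ ζ) := funext₃ htm
  have hc := X.isTwoCocycle_cocycleOfDual hχ hζ
  have horth := fun τ (hτ : τ ≠ 1) =>
    X.sum_twistedCommutator_cocycleOfDual_eq_zero hχ hχbij hζnorm hτ
  refine ⟨horth, hc.commutatorTransform_bijective horth,
    fun τ f => funext (hc.commutatorTransform_twistedConj τ f), Fintype.card Q,
    (LinearEquiv.ofBijective _ (X.linearCombination_projectiveRep_bijective (ζ := ζ) hχbij)).trans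
      (Matrix.reindexAlgEquiv ℂ ℂ (Fintype.equivFin Q)).toLinearEquiv, fun f h => ?_⟩
  simp [linearCombination_twistedConv (X.projectiveRep_mul hχ hζ)]

theorem stmt14
    {A G Q : Type} [CommGroup A] [Group G] [Group Q]
    [Fintype A] [Fintype G] [Fintype Q]
    (i : A →* G) (p : G →* Q)
    (hi : Function.Injective i) (hp : Function.Surjective p)
    (hker : ∀ γ : G, p γ = 1 ↔ γ ∈ Set.range i)
    (s : Q → G) (hs : ∀ q, p (s q) = q) (hs1 : s 1 = 1)
    (r : G → A) (hr : ∀ γ : G, γ = i (r γ) * s (p γ))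
    (β : Q → Q → A) (hβ : ∀ g₁ g₂, s g₁ * s g₂ = i (β g₁ g₂) * s (g₁ * g₂))
    (act : Q → A → A) (hact : ∀ g a, i (act g a) = s g * i a * (s g)⁻¹)
    (π : Q → A → ℂˣ)
    (hπhom : ∀ g a b, π g (a * b) = π g a * π g b)
    (hπcoc : ∀ g₁ g₂ a, π (g₁ * g₂) a = π g₁ a * π g₂ (act g₁⁻¹ a))
    (Φ : G → G → ℂˣ)
    (hΦ : ∀ γ₁ γ₂, Φ γ₁ γ₂ = (π (p γ₁) (act (p γ₁) (r γ₂)))⁻¹)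
    (ζ : Q → Q → ℂˣ)
    (hζ : ∀ g₁ g₂ g₃, ζ g₂ g₃ * (ζ (g₁ * g₂) g₃)⁻¹ * ζ g₁ (g₂ * g₃) * (ζ g₁ g₂)⁻¹
      = π g₁ (act g₁ (β g₂ g₃)))
    (cπ : G → G → ℂˣ)
    (hcπ : ∀ γ₁ γ₂, cπ γ₁ γ₂ = Φ γ₁ γ₂ * ζ (p γ₁) (p γ₂))
    (hζnorm : ∀ g : Q, ζ 1 g = 1 ∧ ζ g 1 = 1)
    (hπinj : Function.Injective π)
    (hπsurj : ∀ χ : A → ℂˣ, (∀ a b, χ (a * b) = χ a * χ b) → ∃ g : Q, π g = χ)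
    (α : G → G → ℂˣ) (hα : ∀ σ γ : G, α σ γ = cπ γ σ * (cπ (γ * σ * γ⁻¹) γ)⁻¹)
    (conj : G → (G → ℂ) → (G → ℂ))
    (hconj : ∀ (τ : G) (f : G → ℂ) (δ : G),
      conj τ f δ = (α (τ⁻¹ * δ * τ) τ : ℂ) * f (τ⁻¹ * δ * τ))
    (reg : G → (G → ℂ) → (G → ℂ))
    (hreg : ∀ (τ : G) (f : G → ℂ) (δ : G), reg τ f δ = f (τ⁻¹ * δ))
    (ψ : (G → ℂ) → (G → ℂ))
    (hψ : ∀ (f : G → ℂ) (δ : G), ψ f δ = ∑ γ : G, f γ * (α γ δ⁻¹ : ℂ))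
    (tm : (G → ℂ) → (G → ℂ) → (G → ℂ))
    (htm : ∀ (f h : G → ℂ) (δ : G),
      tm f h δ = ∑ σ : G, (cπ σ (σ⁻¹ * δ) : ℂ) * f σ * h (σ⁻¹ * δ)) :
    (∀ τ : G, τ ≠ 1 → ∑ γ : G, ((α γ τ : ℂ)) = 0) ∧
    Function.Bijective ψ ∧
    (∀ (τ : G) (f : G → ℂ), ψ (conj τ f) = reg τ (ψ f)) ∧
    (∃ (n : ℕ) (e : (G → ℂ) ≃ₗ[ℂ] Matrix (Fin n) (Fin n) ℂ),
      ∀ f h : G → ℂ, e (tm f h) = e f * e h) :=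
  stmt14_general i p hi hker s hs hs1 r hr β hβ act hact π hπhom hπcoc Φ hΦ ζ hζ cπ hcπ hζnorm hπinj
    hπsurj α hα conj hconj reg hreg ψ hψ tm htm
end

section
/- Let Q = C₄ × C₂ = ⟨σ⟩×⟨τ⟩ act on A = C₄ × C₂ = ⟨x⟩×⟨y⟩ by σ(x)=xy, τ(x)=x⁻¹, σ(y)=τ(y)=y, and let Â = ⟨x̂⟩×⟨ŷ⟩ with x̂(x)=i, x̂(y)=1, ŷ(x)=1, ŷ(y)=-1. Then the map π : Q → Â defined by π(σᵏτˡ) = x̂^{l-(-1)ˡk}·ŷˡ is a bijective 1-cocycle with respect to the diagonal Q-action on Â. -/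
/-!
Write `g = σᵏτˡ` and `a = xᵐyⁿ`. Every value of `π g` is a power of `i`: `π g a = i ^ e(g, a)` with
`e(g, a) = (l - (-1)ˡ k) m + 2 l n ∈ ZMod 4`. The character property, the cocycle identity and the
injectivity of `g ↦ e(g, ·)` are then finite identities in `ZMod 4`, and bijectivity onto `Â`
follows from injectivity because `|Â| = |A| = |Q| = 8`.
-/

open AddChar Function

namespace AddChar

variable {n : ℕ} [NeZero n]

lemma zmodChar_injective {C : Type*} [CommMonoid C] {ζ : C} (h : IsPrimitiveRoot ζ n) :
    Injective (zmodChar n h.pow_eq_one) :=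
  fun a b hab => ZMod.val_injective n (h.pow_inj (ZMod.val_lt a) (ZMod.val_lt b) hab)

lemma zmodChar_intCast {G₀ : Type*} [CommGroupWithZero G₀] {ζ : G₀} (hζ : ζ ^ n = 1) (z : ℤ) :
    zmodChar n hζ z = ζ ^ z := by
  have hζ0 : ζ ≠ 0 := by rintro rfl; simp [zero_pow (NeZero.ne n)] at hζ
  rw [zmodChar_apply, ← zpow_natCast, ZMod.val_intCast]
  conv_rhs => rw [← Int.emod_add_mul_ediv z n, zpow_add₀ hζ0, zpow_mul, zpow_natCast, hζ,
    one_zpow, mul_one]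

end AddChar

noncomputable abbrev iChar : AddChar (ZMod 4) ℂ := zmodChar 4 Complex.I_pow_four

def cocycleExp (g a : ZMod 4 × ZMod 2) : ZMod 4 :=
  ((g.2.val : ZMod 4) - (-1) ^ g.2.val * g.1) * a.1 + 2 * (g.2.val * a.2.val : ℕ)

def qAction (g a : ZMod 4 × ZMod 2) : ZMod 4 × ZMod 2 :=
  ((-1) ^ g.2.val * a.1, a.2 + (g.1.val : ZMod 2) * (a.1.val : ZMod 2))

lemma cocycleExp_add_right (g a b : ZMod 4 × ZMod 2) :
    cocycleExp g (a + b) = cocycleExp g a + cocycleExp g b := by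
  revert g a b; decide

lemma cocycleExp_add_left (g₁ g₂ a : ZMod 4 × ZMod 2) :
    cocycleExp (g₁ + g₂) a = cocycleExp g₁ a + cocycleExp g₂ (qAction (-g₁) a) := by
  revert g₁ g₂ a; decide

lemma cocycleExp_injective : Injective cocycleExp := by
  decide

def cocycleExpHom (g : ZMod 4 × ZMod 2) : ZMod 4 × ZMod 2 →+ ZMod 4 where
  toFun := cocycleExp g
  map_zero' := by revert g; decide
  map_add' := cocycleExp_add_right g

noncomputable def cocycleChar (g : ZMod 4 × ZMod 2) : AddChar (ZMod 4 × ZMod 2) ℂ :=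
  iChar.compAddMonoidHom (cocycleExpHom g)

lemma cocycleChar_apply (g a : ZMod 4 × ZMod 2) : cocycleChar g a = iChar (cocycleExp g a) := rfl

lemma cocycleChar_mk (k : ZMod 4) (l : ZMod 2) (m : ZMod 4) (n : ZMod 2) :
    cocycleChar (k, l) (m, n) =
      Complex.I ^ (((l.val : ℤ) - (-1 : ℤ) ^ l.val * (k.val : ℤ)) * (m.val : ℤ))
        * (-1 : ℂ) ^ (l.val * n.val) := by
  rw [← Complex.I_sq, ← pow_mul, ← zmodChar_intCast Complex.I_pow_four,
    ← zmodChar_apply' Complex.I_pow_four, ← map_add_eq_mul, cocycleChar_apply, cocycleExp]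
  simp

lemma cocycleChar_injective : Injective cocycleChar := fun _ _ h =>
  cocycleExp_injective <| funext fun a =>
    zmodChar_injective Complex.isPrimitiveRoot_I (DFunLike.congr_fun h a)

lemma cocycleChar_bijective : Bijective cocycleChar := by
  rw [Fintype.bijective_iff_injective_and_card, AddChar.card_eq]
  exact ⟨cocycleChar_injective, rfl⟩

theorem stmt19
    (act : (ZMod 4 × ZMod 2) → (ZMod 4 × ZMod 2) → (ZMod 4 × ZMod 2))
    (hact : ∀ (k : ZMod 4) (l : ZMod 2) (m : ZMod 4) (n : ZMod 2),
      act (k, l) (m, n) = ((-1 : ZMod 4) ^ l.val * m, n + (k.val : ZMod 2) * (m.val : ZMod 2)))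
    (π : (ZMod 4 × ZMod 2) → (ZMod 4 × ZMod 2) → ℂ)
    (hπ : ∀ (k : ZMod 4) (l : ZMod 2) (m : ZMod 4) (n : ZMod 2),
      π (k, l) (m, n)
        = Complex.I ^ (((l.val : ℤ) - (-1 : ℤ) ^ l.val * (k.val : ℤ)) * (m.val : ℤ))
            * (-1 : ℂ) ^ (l.val * n.val)) :
    (∀ g a b, π g (a + b) = π g a * π g b) ∧
    (∀ g₁ g₂ a, π (g₁ + g₂) a = π g₁ a * π g₂ (act (-g₁) a)) ∧
    Function.Injective π ∧
    (∀ χ : ZMod 4 × ZMod 2 → ℂ, χ 0 = 1 → (∀ a b, χ (a + b) = χ a * χ b) →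
      ∃ g, π g = χ) := by
  obtain rfl : π = fun g => ⇑(cocycleChar g) := funext fun ⟨k, l⟩ => funext fun ⟨m, n⟩ =>
    (hπ k l m n).trans (cocycleChar_mk k l m n).symm
  obtain rfl : act = qAction := funext fun ⟨k, l⟩ => funext fun ⟨m, n⟩ => hact k l m n
  refine ⟨fun g => map_add_eq_mul (cocycleChar g), fun g₁ g₂ a => ?_,
    DFunLike.coe_injective.comp cocycleChar_injective, fun χ h0 hadd => ?_⟩
  · simp only [cocycleChar_apply, cocycleExp_add_left, map_add_eq_mul]
  · obtain ⟨g, hg⟩ := cocycleChar_bijective.surjective ⟨χ, h0, hadd⟩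
    exact ⟨g, congrArg DFunLike.coe hg⟩
end
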